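/- arXiv:2109.06561 — 3 statements merged into one kernel-verified Lean document; each statement's English description precedes it below -/
import Mathlib

section
/- Let H be a graph with vertex set V_H containing an s-clique, let C_1 be a subset of V_H such that H[C_1] is s-colorable, and let G be any graph. Define G* with vertex set (∪_{i∈C_1} V_G × {i}) ∪ (V_H \ C_1), where each V_G × {i} is an independent set, (v,i) is adjacent to (u,j) for i,j ∈ C_1 iff {i,j} ∈ E_H and {v,u} ∈ E_G, each j ∈ V_H \ C_1 is adjacent to all of V_G × {i} whenever {i,j} ∈ E_H, and i,j ∈ V_H \ C_1 are adjacent iff {i,j} ∈ E_H. Then: if G contains an s-clique, G* contains H as an induced subgraph. -/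
/-!
Composing an `s`-colouring of `H[C₁]` with an `s`-clique of `G` gives a homomorphism
`f : H[C₁] → G`. Send `i ∈ C₁` to `(f i, i)` and every other vertex of `H` to itself. Between
two copies of `G`, adjacency in `G*` asks for `H`-adjacency and `G`-adjacency; the second
follows from the first because `f` is a homomorphism, so the map is an induced embedding.
-/

/-- The graph `G*` of the Dalirrooyfard et al. reduction, built from an input graph `G`,
a pattern graph `H` and a set `C₁` of pattern vertices: it has a copy `V_G × {i}` of the
vertices of `G` for each `i ∈ C₁` (each such copy being an independent set, with
`(v,i)` adjacent to `(u,j)` iff `{i,j} ∈ E_H` and `{v,u} ∈ E_G`), together with one copy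
of each `j ∈ V_H \ C₁` (adjacent to all of `V_G × {i}` iff `{i,j} ∈ E_H`, and adjacent
to each other according to `E_H`). -/
def GstarGraph {VG VH : Type*} (G : SimpleGraph VG) (H : SimpleGraph VH) (C1 : Set VH) :
    SimpleGraph ((VG × C1) ⊕ {j : VH // j ∉ C1}) where
  Adj x y :=
    match x, y with
    | .inl (v, i), .inl (u, j) => H.Adj i j ∧ G.Adj v u
    | .inl (_, i), .inr j => H.Adj i j
    | .inr i, .inl (_, j) => H.Adj i j
    | .inr i, .inr j => H.Adj i j
  symm := by
    refine ⟨?_⟩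
    rintro (⟨v, i⟩ | i) (⟨u, j⟩ | j) h
    · exact ⟨h.1.symm, h.2.symm⟩
    · exact h.symm
    · exact h.symm
    · exact h.symm
  loopless := by
    refine ⟨?_⟩
    rintro (⟨v, i⟩ | i) h
    · exact H.loopless.irrefl _ h.1
    · exact H.loopless.irrefl _ h

namespace GstarGraph

variable {VG VH : Type*} {G : SimpleGraph VG} {H : SimpleGraph VH} {C1 : Set VH}

noncomputable def embedVertex (f : C1 → VG) (i : VH) : (VG × C1) ⊕ {j : VH // j ∉ C1} := by
  classical
  exact if h : i ∈ C1 then .inl (f ⟨i, h⟩, ⟨i, h⟩) else .inr ⟨i, h⟩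

theorem embedVertex_of_mem (f : C1 → VG) {i : VH} (h : i ∈ C1) :
    embedVertex f i = .inl (f ⟨i, h⟩, ⟨i, h⟩) := by
  simp [embedVertex, h]

theorem embedVertex_of_notMem (f : C1 → VG) {i : VH} (h : i ∉ C1) :
    embedVertex f i = .inr ⟨i, h⟩ := by
  simp [embedVertex, h]

theorem embedVertex_injective (f : C1 → VG) : Function.Injective (embedVertex f) := by
  intro i j hij
  by_cases hi : i ∈ C1 <;> by_cases hj : j ∈ C1 <;>
    simp_all [embedVertex_of_mem, embedVertex_of_notMem]

theorem adj_embedVertex_iff (f : H.induce C1 →g G) (i j : VH) :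
    (GstarGraph G H C1).Adj (embedVertex f i) (embedVertex f j) ↔ H.Adj i j := by
  by_cases hi : i ∈ C1 <;> by_cases hj : j ∈ C1 <;>
    simp only [embedVertex_of_mem, embedVertex_of_notMem, hi, hj, not_false_iff, GstarGraph]
  exact and_iff_left_of_imp fun hij =>
    f.map_adj (show (H.induce C1).Adj ⟨i, hi⟩ ⟨j, hj⟩ from hij)

noncomputable def embeddingOfHom (f : H.induce C1 →g G) : H ↪g GstarGraph G H C1 where
  toFun := embedVertex f
  inj' := embedVertex_injective f
  map_rel_iff' := adj_embedVertex_iff f _ _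

end GstarGraph

theorem Gstar_induced_of_clique_general {VG VH : Type*}
    (G : SimpleGraph VG) (H : SimpleGraph VH) (C1 : Set VH) (s : ℕ)
    (hcol : (H.induce C1).Colorable s)
    (hGclique : ∃ K : Finset VG, G.IsNClique s K) :
    Nonempty (H ↪g GstarGraph G H C1) := by
  obtain ⟨c⟩ := hcol
  obtain ⟨K, hK⟩ := hGclique
  exact ⟨GstarGraph.embeddingOfHom
    ((SimpleGraph.topEmbeddingOfNotCliqueFree hK.not_cliqueFree).toHom.comp c)⟩

/-- If `H` contains an `s`-clique, `H[C₁]` is `s`-colorable, and `G` contains an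
`s`-clique, then `G*` contains `H` as an induced subgraph. -/
theorem Gstar_induced_of_clique {VG VH : Type*} [DecidableEq VG] [DecidableEq VH]
    (G : SimpleGraph VG) (H : SimpleGraph VH) (C1 : Set VH) (s : ℕ)
    (hHclique : ∃ K : Finset VH, H.IsNClique s K)
    (hcol : (H.induce C1).Colorable s)
    (hGclique : ∃ K : Finset VG, G.IsNClique s K) :
    Nonempty (H ↪g GstarGraph G H C1) :=
  Gstar_induced_of_clique_general G H C1 s hcol hGclique
end

section
/- Fix k ≥ 3 and N ≥ 1, and binary strings x_0, x_1 ∈ {0,1}^{N×N}. Construct the graph G(x_0,x_1) with vertex sets A_1, A_2, B_1, B_2 each of size N, where each of these four sets induces a clique, there is a path of length 3 (with two internal fresh vertices) joining a_{1,i} to b_{1,i} for each i ∈ [N], an edge between a_{2,i} and b_{2,i} for each i ∈ [N], an edge {a_{1,j}, a_{2,k}} whenever x_0(j,k) = 1, and an edge {b_{1,j}, b_{2,k}} whenever x_1(j,k) = 1. Then G(x_0,x_1) contains an induced cycle of length 6 if and only if there exist (j,k) with x_0(j,k) = x_1(j,k) = 1. -/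
/-!
If the induced hexagon meets an inner vertex `p_{m,t}` of a connecting path, then, these vertices
having degree 2, it contains the whole path `a_{1,m} p_{m,0} p_{m,1} b_{1,m}`. Its last two
vertices are an adjacent pair made of a neighbour of `a_{1,m}` on the `A` side and a neighbour of
`b_{1,m}` on the `B` side; the only edges between the sides are the matching edges
`a_{2,k} b_{2,k}`, so `x₀ m k` and `x₁ m k`. Otherwise the hexagon lies in the four cliques, which
are joined along the path `A₁ – A₂ – B₂ – B₁`: hexagon vertices at distance 2 or 3 lie in
different cliques, and a finite check shows that no closed walk of length 6 along that path does
this.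
-/

/-- Vertices of the induced even cycle lower bound graph: `inl (s, i)` is the `i`-th
vertex of the set `A₁, A₂, B₁, B₂` (for `s = 0, 1, 2, 3` respectively), and
`inr (i, t)` for `t = 0, 1` are the two internal vertices of the length-3 path
joining `a_{1,i}` to `b_{1,i}`. -/
abbrev EvenCycleVertex (N : ℕ) := (Fin 4 × Fin N) ⊕ (Fin N × Fin 2)

/-- Base relation for the induced even cycle lower bound graph `G(x₀, x₁)`:
each of `A₁, A₂, B₁, B₂` is a clique; for each `i` there is a path of length 3
`a_{1,i} - p_{i,0} - p_{i,1} - b_{1,i}` and an edge `{a_{2,i}, b_{2,i}}`; and there is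
an edge `{a_{1,j}, a_{2,k}}` iff `x₀ j k` and an edge `{b_{1,j}, b_{2,k}}` iff `x₁ j k`.
The graph is `SimpleGraph.fromRel` of this relation. -/
def evenCycleRel {N : ℕ} (x0 x1 : Fin N → Fin N → Prop) :
    EvenCycleVertex N → EvenCycleVertex N → Prop := fun a b =>
  match a, b with
  | .inl (s, i), .inl (t, j) =>
      (s = t) ∨ (s = 1 ∧ t = 3 ∧ i = j) ∨ (s = 0 ∧ t = 1 ∧ x0 i j) ∨
        (s = 2 ∧ t = 3 ∧ x1 i j)
  | .inl (s, i), .inr (j, t) => i = j ∧ ((s = 0 ∧ t = 0) ∨ (s = 2 ∧ t = 1))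
  | .inr (i, t), .inr (j, u) => i = j ∧ t = 0 ∧ u = 1
  | .inr _, .inl _ => False

namespace SimpleGraph

def cycleGraph.rotate {n : ℕ} (c : Fin (n + 2)) : cycleGraph (n + 2) ≃g cycleGraph (n + 2) where
  toEquiv := Equiv.addRight c
  map_rel_iff' := by simp [cycleGraph_adj]

def cycleGraph.reflect (n : ℕ) : cycleGraph (n + 2) ≃g cycleGraph (n + 2) where
  toEquiv := Equiv.neg _
  map_rel_iff' := by simp [cycleGraph_adj, neg_add_eq_sub, or_comm]

lemma Embedding.cycleGraph_succ_or_pred_eq {V : Type*} {G : SimpleGraph V} {n : ℕ}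
    (f : cycleGraph (n + 3) ↪g G) {i : Fin (n + 3)} {u w : V}
    (h : ∀ x, G.Adj (f i) x → x = u ∨ x = w) : f (i + 1) = u ∨ f (i - 1) = u := by
  have hne : f (i + 1) ≠ f (i - 1) := by
    rw [f.injective.ne_iff, sub_eq_add_neg, Ne, add_right_inj, ← add_eq_zero_iff_eq_neg,
      Fin.ext_iff, Fin.val_add, Fin.val_one, Fin.val_zero, Nat.mod_eq_of_lt (by omega)]
    omega
  have hsucc := h _ (f.map_adj_iff.2 ((cycleGraph_adj (n := n + 1)).2
    (Or.inr (add_sub_cancel_left i 1))))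
  have hpred := h _ (f.map_adj_iff.2 ((cycleGraph_adj (n := n + 1)).2
    (Or.inl (sub_sub_cancel i 1))))
  grind

end SimpleGraph

/-- Position of the parts `A₁, A₂, B₁, B₂` on the path `A₁ – A₂ – B₂ – B₁` formed by the
edges between different parts. -/
def partPos : Fin 4 → ℕ := ![0, 1, 3, 2]

def PartsNear (s t : Fin 4) : Prop := (partPos s).dist (partPos t) ≤ 1

instance : DecidableRel PartsNear := fun _ _ => by unfold PartsNear; infer_instance

lemma eq_of_partsNear_hexagon : ∀ a b c d e f : Fin 4, PartsNear a b → PartsNear b c →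
    PartsNear c d → PartsNear d e → PartsNear e f → PartsNear f a →
    a = c ∨ b = d ∨ c = e ∨ d = f ∨ e = a ∨ f = b ∨ a = d ∨ b = e ∨ c = f := by
  unfold PartsNear partPos; decide

section LowerBoundGraph

variable {N : ℕ} {x0 x1 : Fin N → Fin N → Prop}

local notation "G" => SimpleGraph.fromRel (evenCycleRel x0 x1)

open SimpleGraph

lemma eq_or_eq_of_adj_inr_zero {m : Fin N} {w : EvenCycleVertex N}
    (h : (G).Adj (.inr (m, 0)) w) : w = .inr (m, 1) ∨ w = .inl (0, m) := by
  rw [fromRel_adj] at h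
  rcases w with ⟨s, i⟩ | ⟨i, t⟩ <;> simp_all [evenCycleRel]

lemma eq_or_eq_of_adj_inr_one {m : Fin N} {w : EvenCycleVertex N}
    (h : (G).Adj (.inr (m, 1)) w) : w = .inr (m, 0) ∨ w = .inl (2, m) := by
  rw [fromRel_adj] at h
  rcases w with ⟨s, i⟩ | ⟨i, t⟩ <;> simp_all [evenCycleRel]

lemma exists_of_adj_inl_zero_of_ne {m : Fin N} {w : EvenCycleVertex N}
    (h : (G).Adj (.inl (0, m)) w) (hw : w ≠ .inr (m, 0)) :
    (∃ j, w = .inl (0, j)) ∨ ∃ k, w = .inl (1, k) ∧ x0 m k := by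
  rw [fromRel_adj] at h
  rcases w with ⟨s, i⟩ | ⟨i, t⟩ <;> simp_all [evenCycleRel]
  grind

lemma exists_of_adj_inl_two_of_ne {m : Fin N} {w : EvenCycleVertex N}
    (h : (G).Adj (.inl (2, m)) w) (hw : w ≠ .inr (m, 1)) :
    (∃ j, w = .inl (2, j)) ∨ ∃ k, w = .inl (3, k) ∧ x1 m k := by
  rw [fromRel_adj] at h
  rcases w with ⟨s, i⟩ | ⟨i, t⟩ <;> simp_all [evenCycleRel]
  grind

lemma exists_of_adj_across {m : Fin N} {z y : EvenCycleVertex N}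
    (hz : (∃ j, z = .inl (0, j)) ∨ ∃ k, z = .inl (1, k) ∧ x0 m k)
    (hy : (∃ j, y = .inl (2, j)) ∨ ∃ k, y = .inl (3, k) ∧ x1 m k)
    (h : (G).Adj z y) : ∃ k, x0 m k ∧ x1 m k := by
  rw [fromRel_adj] at h
  rcases hz with ⟨j, rfl⟩ | ⟨k, rfl, hk⟩ <;> rcases hy with ⟨j', rfl⟩ | ⟨k', rfl, hk'⟩ <;>
    simp_all [evenCycleRel]
  exact ⟨k', hk, hk'⟩

lemma partsNear_of_adj {p q : Fin 4 × Fin N} (h : (G).Adj (.inl p) (.inl q)) :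
    PartsNear p.1 q.1 := by
  obtain ⟨s, i⟩ := p
  obtain ⟨t, j⟩ := q
  rw [fromRel_adj] at h
  obtain ⟨-, h | h⟩ := h <;>
    rcases h with rfl | ⟨rfl, rfl, -⟩ | ⟨rfl, rfl, -⟩ | ⟨rfl, rfl, -⟩ <;>
    simp [PartsNear, partPos, Nat.dist]

lemma adj_inl_of_fst_eq {p q : Fin 4 × Fin N} (h : p.1 = q.1) (hne : p ≠ q) :
    (G).Adj (.inl p) (.inl q) :=
  fromRel_adj .. |>.2 ⟨by simpa using hne, Or.inl (Or.inl h)⟩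

lemma exists_of_hexagon_through_path {m : Fin N} (g : cycleGraph 6 ↪g G)
    (h0 : g 0 = .inr (m, 0)) (h1 : g 1 = .inr (m, 1)) : ∃ j k, x0 j k ∧ x1 j k := by
  have h5 : g 5 = .inl (0, m) := by
    have := g.cycleGraph_succ_or_pred_eq (i := 0)
      fun x hx => (eq_or_eq_of_adj_inr_zero (h0 ▸ hx)).symm
    simpa [h1, show (-1 : Fin 6) = 5 from rfl] using this
  have h2 : g 2 = .inl (2, m) := by
    have := g.cycleGraph_succ_or_pred_eq (i := 1)
      fun x hx => (eq_or_eq_of_adj_inr_one (h1 ▸ hx)).symm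
    simpa [h0] using this
  have h4 := exists_of_adj_inl_zero_of_ne
    (h5 ▸ g.map_adj_iff.2 (by decide : (cycleGraph 6).Adj 5 4))
    (h0 ▸ g.injective.ne (by decide : (4 : Fin 6) ≠ 0))
  have h3 := exists_of_adj_inl_two_of_ne
    (h2 ▸ g.map_adj_iff.2 (by decide : (cycleGraph 6).Adj 2 3))
    (h1 ▸ g.injective.ne (by decide : (3 : Fin 6) ≠ 1))
  exact ⟨m, exists_of_adj_across h4 h3 (g.map_adj_iff.2 (by decide))⟩

lemma exists_hexagon_through_path_of_apply_eq_inr (f : cycleGraph 6 ↪g G) {i : Fin 6}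
    {m : Fin N} {t : Fin 2} (hi : f i = .inr (m, t)) :
    ∃ g : cycleGraph 6 ↪g G, g 0 = .inr (m, 0) ∧ g 1 = .inr (m, 1) := by
  obtain ⟨i₀, hi₀⟩ : ∃ i₀, f i₀ = .inr (m, 0) := by
    fin_cases t
    · exact ⟨i, hi⟩
    · rcases f.cycleGraph_succ_or_pred_eq fun x hx => eq_or_eq_of_adj_inr_one (hi ▸ hx)
        with h | h
      exacts [⟨_, h⟩, ⟨_, h⟩]
  set f₁ := f.comp (cycleGraph.rotate i₀).toEmbedding
  have hf₁ : f₁ 0 = .inr (m, 0) := by simpa [f₁, cycleGraph.rotate] using hi₀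
  rcases f₁.cycleGraph_succ_or_pred_eq (i := 0) fun x hx => eq_or_eq_of_adj_inr_zero (hf₁ ▸ hx)
    with h | h
  · exact ⟨f₁, hf₁, h⟩
  · refine ⟨f₁.comp (cycleGraph.reflect 4).toEmbedding, ?_, ?_⟩
    · simpa [cycleGraph.reflect] using hf₁
    · simpa [cycleGraph.reflect] using h

lemma exists_apply_eq_inr_of_hexagon (f : cycleGraph 6 ↪g G) : ∃ i m t, f i = .inr (m, t) := by
  by_contra! hinr
  have hinl : ∀ i, ∃ p, f i = .inl p := fun i =>
    match hfi : f i with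
    | .inl p => ⟨p, rfl⟩
    | .inr (m, t) => (hinr i m t hfi).elim
  choose p hp using hinl
  have hnear (i : Fin 6) : PartsNear (p i).1 (p (i + 1)).1 :=
    partsNear_of_adj <| hp i ▸ hp (i + 1) ▸
      f.map_adj_iff.2 ((cycleGraph_adj (n := 4)).2 (Or.inr (add_sub_cancel_left i 1)))
  have hsep (i j : Fin 6) (hadj : ¬ (cycleGraph 6).Adj i j) (hne : i ≠ j) : (p i).1 ≠ (p j).1 :=
    fun h => hadj <| f.map_adj_iff.1 <| hp i ▸ hp j ▸
      adj_inl_of_fst_eq h fun hpq => hne (f.injective (by rw [hp i, hp j, hpq]))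
  rcases eq_of_partsNear_hexagon _ _ _ _ _ _ (hnear 0) (hnear 1) (hnear 2) (hnear 3) (hnear 4)
      (hnear 5) with h | h | h | h | h | h | h | h | h <;>
    exact hsep _ _ (by decide) (by decide) h

lemma nonempty_hexagon_of {j k : Fin N} (h0 : x0 j k) (h1 : x1 j k) :
    Nonempty (cycleGraph 6 ↪g G) := by
  let v : Fin 6 → EvenCycleVertex N :=
    ![.inl (0, j), .inr (j, 0), .inr (j, 1), .inl (2, j), .inl (3, k), .inl (1, k)]
  have hinj : v.Injective := by
    intro a b hab
    fin_cases a <;> fin_cases b <;> simp_all [v]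
  have hadj (a b : Fin 6) : (G).Adj (v a) (v b) ↔ (cycleGraph 6).Adj a b := by
    rw [fromRel_adj]
    fin_cases a <;> fin_cases b <;> simp [v, evenCycleRel, h0, h1] <;> decide
  exact ⟨⟨⟨v, hinj⟩, hadj _ _⟩⟩

end LowerBoundGraph

theorem evenCycle_lowerBoundGraph_induced_sixCycle_iff_general (N : ℕ)
    (x0 x1 : Fin N → Fin N → Prop) :
    Nonempty (SimpleGraph.cycleGraph 6 ↪g SimpleGraph.fromRel (evenCycleRel x0 x1)) ↔
      ∃ j k : Fin N, x0 j k ∧ x1 j k := by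
  constructor
  · rintro ⟨f⟩
    obtain ⟨i, m, t, hi⟩ := exists_apply_eq_inr_of_hexagon f
    obtain ⟨g, h0, h1⟩ := exists_hexagon_through_path_of_apply_eq_inr f hi
    exact exists_of_hexagon_through_path g h0 h1
  · rintro ⟨j, k, h0, h1⟩
    exact nonempty_hexagon_of h0 h1

/-- The lower bound graph `G(x₀, x₁)` contains an induced cycle of length 6 if and
only if there is a pair `(j, k)` with `x₀ j k = x₁ j k = 1`. -/
theorem evenCycle_lowerBoundGraph_induced_sixCycle_iff (N : ℕ) (hN : 1 ≤ N)
    (x0 x1 : Fin N → Fin N → Prop) :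
    Nonempty (SimpleGraph.cycleGraph 6 ↪g SimpleGraph.fromRel (evenCycleRel x0 x1)) ↔
      ∃ j k : Fin N, x0 j k ∧ x1 j k :=
  evenCycle_lowerBoundGraph_induced_sixCycle_iff_general N x0 x1
end

section
/- Suppose there exists an (n, k+m)-family of perfect hash functions F' from [n] to [k+m]. Then there exists a family F of functions χ: [n] → {0,1,...,k} of size |F'| · binomial(k+m, k) · k! such that for any two disjoint sets S, T ⊆ [n] with |S| = k and |T| ≤ m, and any bijection b: S → {1,...,k}, there is χ ∈ F with χ agreeing with b on S and χ(t) = 0 for all t ∈ T. -/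
/-!
Given a perfect hash function `f` injective on `S ∪ T` and a bijection `b : S → Fin k`, the map
`e = f ∘ b⁻¹` embeds `Fin k` into `Fin (k + m)`, and `f` sends `T` outside its range. Colouring
`e c` by `c + 1` and every other point of `Fin (k + m)` by `0`, the colouring pulled back along
`f` is the one sought. It is determined by the pair `(f, e)`, and there are
`|F'| · (k + m)! / m! = |F'| · binomial(k + m, k) · k!` such pairs.
-/

open Finset Function

section embeddingColoring

variable {β : Type*} {k : ℕ}

noncomputable def embeddingColoring (e : Fin k ↪ β) : β → Fin (k + 1) :=
  extend e Fin.succ 0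

theorem embeddingColoring_apply (e : Fin k ↪ β) (c : Fin k) :
    embeddingColoring e (e c) = c.succ :=
  e.injective.extend_apply _ _ c

theorem embeddingColoring_of_notMem_range (e : Fin k ↪ β) {y : β}
    (hy : y ∉ Set.range e) : embeddingColoring e y = 0 :=
  extend_apply' _ _ y hy

end embeddingColoring

theorem exists_embedding_comp_eq_of_injOn {α β γ : Type*} [Fintype γ] {S T : Finset α}
    (hST : Disjoint S T) {b : α → γ} (hb : Set.InjOn b S) (hS : #S = Fintype.card γ)
    {f : α → β} (hf : Set.InjOn f (↑S ∪ ↑T)) :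
    ∃ e : γ ↪ β, (∀ x ∈ S, e (b x) = f x) ∧ ∀ t ∈ T, f t ∉ Set.range e := by
  have hb_surj : ∀ c, ∃ x ∈ S, b x = c := fun c =>
    surjOn_of_injOn_of_card_le b (t := univ) (fun _ _ => mem_coe.2 (mem_univ _)) hb
      (by rw [card_univ, hS]) (mem_univ c)
  choose g hgS hbg using hb_surj
  have hgb : ∀ x ∈ S, g (b x) = x := fun x hx => hb (hgS _) hx (hbg _)
  have hfS : Set.InjOn f S := hf.mono Set.subset_union_left
  have hfg : Injective (f ∘ g) := fun c c' h => by
    rw [← hbg c, ← hbg c', hfS (hgS c) (hgS c') h]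
  refine ⟨⟨f ∘ g, hfg⟩, fun x hx => congrArg f (hgb x hx), ?_⟩
  rintro t ht ⟨c, hc⟩
  have hgc : g c = t := hf (Or.inl (hgS c)) (Or.inr ht) hc
  exact disjoint_left.1 hST (hgc ▸ hgS c) ht

theorem card_finset_prod_embedding_fin {α : Type*} (F' : Finset α) (k m : ℕ) :
    Fintype.card (F' × (Fin k ↪ Fin (k + m))) = #F' * Nat.choose (k + m) k * Nat.factorial k := by
  rw [Fintype.card_prod, Fintype.card_coe, Fintype.card_embedding_eq, Fintype.card_fin,
    Fintype.card_fin, Nat.descFactorial_eq_factorial_mul_choose, mul_assoc, mul_comm k.factorial]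

/-- Suppose `F'` is an `(n, k+m)`-family of perfect hash functions from `[n]` to
`[k+m]` (for every subset of size at most `k+m` some member is injective on it).
Then there is a family `F` of colorings `χ : [n] → {0, 1, …, k}` of size
`|F'| · binomial(k+m, k) · k!` such that for any disjoint `S, T ⊆ [n]` with `|S| = k`
and `|T| ≤ m`, and any bijection `b : S → {1, …, k}`, some `χ ∈ F` agrees with `b` on
`S` (via the identification of `{1, …, k}` with the nonzero colors) and assigns color
`0` to all of `T`. -/
theorem perfect_hash_to_separating_family (n k m : ℕ)
    (F' : Finset (Fin n → Fin (k + m)))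
    (hF' : ∀ A : Finset (Fin n), A.card ≤ k + m → ∃ f ∈ F', Set.InjOn f ↑A) :
    ∃ F : Fin (F'.card * Nat.choose (k + m) k * Nat.factorial k) →
        (Fin n → Fin (k + 1)),
      ∀ S T : Finset (Fin n), Disjoint S T → S.card = k → T.card ≤ m →
        ∀ b : Fin n → Fin k, Set.InjOn b ↑S →
          ∃ idx, (∀ x ∈ S, F idx x = (b x).succ) ∧ (∀ t ∈ T, F idx t = 0) := by
  classical
  let σ := Fintype.equivFinOfCardEq (card_finset_prod_embedding_fin F' k m)
  refine ⟨fun idx => embeddingColoring (σ.symm idx).2 ∘ (σ.symm idx).1, ?_⟩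
  intro S T hST hS hT b hb
  obtain ⟨f, hfF', hf⟩ := hF' (S ∪ T) ((card_union_le S T).trans (by omega))
  obtain ⟨e, heS, heT⟩ := exists_embedding_comp_eq_of_injOn hST hb
    (by rw [hS, Fintype.card_fin]) (hf.mono (coe_union S T).ge)
  refine ⟨σ (⟨f, hfF'⟩, e), fun x hx => ?_, fun t ht => ?_⟩
  · simp only [Equiv.symm_apply_apply, comp_apply, ← heS x hx, embeddingColoring_apply]
  · simp only [Equiv.symm_apply_apply, comp_apply, embeddingColoring_of_notMem_range e (heT t ht)]
end
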